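/- Fix an integer m ≥ 1 and a matrix S as below. There exists a constant c₀ > 0 depending only on S and m such that the following holds. Let p be a prime and let 𝓕_k ∈ 𝔉(S,m), k = 1,2,…, be permutation polynomial systems (i.e. each map (w_0,…,w_m) ↦ (F_{k,0}(w),…,F_{k,m}(w)) is a bijection of F_p^{m+1}) with s_{0,1}·s_{1,2}⋯s_{m−1,m} ≠ 0, and let F_i^{(n)} be the iterated polynomials. Then for any positive integers c, M, N and any vector a = (a_0,…,a_{m−1}) ∈ F_p^m with a ≠ 0, U_{a,c}(M,N) ≤ c₀·A(N,p), where A(N,p) = N·p^{m+1} if N ≤ p^{1/(m+1)} and A(N,p) = N²·p^{m(m+2)/(m+1)} if N > p^{1/(m+1)}. -/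

import Mathlib

open MvPolynomial

/-- Membership of a polynomial system `F = (F_0, …, F_m)` over `R` in the class `𝔉(S,m)`,
where `s i j` records the entries of the upper triangular matrix `S` (for `i < j`). -/
def IsFSystem {R : Type*} [CommRing R] (m : ℕ) (s : ℕ → ℕ → ℕ)
    (F : Fin (m + 1) → MvPolynomial (Fin (m + 1)) R) : Prop :=
  (∃ g h : R, g ≠ 0 ∧
      F (Fin.last m) = MvPolynomial.C g * MvPolynomial.X (Fin.last m) + MvPolynomial.C h) ∧
  ∀ i : Fin (m + 1), (i : ℕ) < m →
    ∃ (G H Gt : MvPolynomial (Fin (m + 1)) R) (g : R),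
      g ≠ 0 ∧
      F i = MvPolynomial.X i * G + H ∧
      (∀ d ∈ G.support, ∀ j : Fin (m + 1), j ≤ i → d j = 0) ∧
      (∀ d ∈ H.support, ∀ j : Fin (m + 1), j ≤ i → d j = 0) ∧
      G = MvPolynomial.C g *
          (∏ j ∈ Finset.univ.filter (fun j : Fin (m + 1) => i < j),
            MvPolynomial.X j ^ s i.val j.val) + Gt ∧
      (∀ d ∈ Gt.support, ∀ j : Fin (m + 1), i < j → d j < s i.val j.val) ∧
      (∀ d ∈ H.support, ∀ j : Fin (m + 1), i < j → d j ≤ s i.val j.val)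

/-- The iterated polynomials `F_i^{(k)}` of a sequence of polynomial systems:
`F_i^{(0)} = X_i` and `F_i^{(k)} = F_{k,i}(F_0^{(k-1)}, …, F_m^{(k-1)})`. -/
noncomputable def iterSys {R : Type*} [CommRing R] (m : ℕ)
    (Fs : ℕ → Fin (m + 1) → MvPolynomial (Fin (m + 1)) R) :
    ℕ → Fin (m + 1) → MvPolynomial (Fin (m + 1)) R
  | 0 => fun i => MvPolynomial.X i
  | k + 1 => fun i => MvPolynomial.bind₁ (iterSys m Fs k) (Fs (k + 1) i)

/-- The additive character `e_p(z) = exp(2πiz/p)` evaluated at an element of `F_p`. -/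
noncomputable def eP (p : ℕ) (x : ZMod p) : ℂ :=
  Complex.exp (2 * Real.pi * Complex.I * (x.val : ℂ) / (p : ℂ))

/-- `e_M(z) = exp(2πiz/M)` for a natural number `z`. -/
noncomputable def eM (M z : ℕ) : ℂ :=
  Complex.exp (2 * Real.pi * Complex.I * (z : ℂ) / (M : ℂ))

/-- The discrepancy of the first `N` points of a sequence in `[0,1)^s`: the supremum over
boxes `B = [a_1,b_1) × ⋯ × [a_s,b_s) ⊆ [0,1)^s` of `|T(B)/N - vol B|`. -/
noncomputable def discrepancy (s N : ℕ) (P : ℕ → Fin s → ℝ) : ℝ :=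
  sSup {D : ℝ | ∃ a b : Fin s → ℝ,
    (∀ j, 0 ≤ a j ∧ a j ≤ b j ∧ b j ≤ 1) ∧
    D = |(((Finset.range N).filter fun n => ∀ j, a j ≤ P n j ∧ P n j < b j).card : ℝ) / N -
        ∏ j, (b j - a j)|}

/-!
Write `ψ_n(w) = ∑_j a_j F_j^{(n)}(w)`. Tracking exponent vectors shows that `F_i^{(k)}` has a
coordinatewise dominant monomial which is linear in `X_i`, free of `X_0, …, X_{i-1}`, of
`X_{i+1}`-degree at least `k` and of total degree `O(k^m)`. For `n' < n`, the substitution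
`w ↦ F^{(n')}(w)` (a bijection) turns `∑_w e_p(ψ_n(w) - ψ_{n'}(w))` into a complete sum whose
phase is affine in `u_i`, for `i` the first index with `a_i ≠ 0`, with slope `a_i (Λ - 1)`,
where `F_i^{(n-n')} = X_i Λ + M`. Averaging over translates in `u_i` bounds this sum by
`p^m deg Λ` via Schwartz–Zippel, as `Λ` is not constant. Cutting `[0, N)` into blocks of length
`L` with `L^{m+1} ≤ p`, Cauchy–Schwarz and expanding the squares give
`U ≤ (N/L + 1)² (L p^{m+1} + L² (BL)^m p^m) ≪ (N/L)² L p^{m+1}`, and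
`L = min(N, ⌊p^{1/(m+1)}⌋)` yields both regimes.
-/

open Finset

section Characters

variable {p : ℕ} [NeZero p]

lemma eP_eq_stdAddChar (x : ZMod p) : eP p x = ZMod.stdAddChar x := by
  rw [ZMod.stdAddChar_apply, ZMod.toCircle_apply, eP]

lemma eP_add (x y : ZMod p) : eP p (x + y) = eP p x * eP p y := by
  simp only [eP_eq_stdAddChar, AddChar.map_add_eq_mul]

lemma norm_eP (x : ZMod p) : ‖eP p x‖ = 1 := by
  rw [eP_eq_stdAddChar, AddChar.norm_apply]

lemma eP_sub (x y : ZMod p) : eP p (x - y) = eP p x * starRingEnd ℂ (eP p y) := by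
  rw [sub_eq_add_neg, eP_add]
  simp only [eP_eq_stdAddChar, AddChar.map_neg_eq_conj]

lemma sum_eP_mul (c : ZMod p) : ∑ x, eP p (x * c) = if c = 0 then (p : ℂ) else 0 := by
  simp only [eP_eq_stdAddChar]
  rw [AddChar.sum_mulShift c (ZMod.isPrimitive_stdAddChar p), ZMod.card]
  split_ifs <;> simp

lemma norm_sum_eP_sub_comm {V : Type*} [Fintype V] (x y : V → ZMod p) :
    ‖∑ w, eP p (x w - y w)‖ = ‖∑ w, eP p (y w - x w)‖ := by
  rw [← RCLike.norm_conj, map_sum]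
  congr 1
  refine sum_congr rfl fun w _ => ?_
  rw [eP_sub, eP_sub, map_mul, Complex.conj_conj, mul_comm]

/-- Translating `u ↦ u + x • e_i` multiplies each term by `e_p(x g(u))`; average over `x`. -/
lemma norm_sum_eP_le_card_zeros_of_affine {ι : Type*} [Fintype ι] [DecidableEq ι] (i : ι)
    (φ g : (ι → ZMod p) → ZMod p) (hφ : ∀ u x, φ (u + Pi.single i x) = φ u + x * g u) :
    ‖∑ u, eP p (φ u)‖ ≤ #{u | g u = 0} := by
  set T := ∑ u, eP p (φ u)
  have hshift (x : ZMod p) : T = ∑ u, eP p (φ u) * eP p (x * g u) :=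
    calc T = ∑ u, eP p (φ (u + (Pi.single i x : ι → ZMod p))) :=
          (Fintype.sum_equiv (Equiv.addRight (Pi.single i x : ι → ZMod p)) _ _ fun _ => rfl).symm
      _ = _ := by simp only [hφ, eP_add]
  have hpT : (p : ℂ) * T = ∑ u, eP p (φ u) * if g u = 0 then (p : ℂ) else 0 :=
    calc (p : ℂ) * T = ∑ x : ZMod p, ∑ u, eP p (φ u) * eP p (x * g u) := by
          simp only [← hshift, sum_const, card_univ, ZMod.card, nsmul_eq_mul]
      _ = _ := by
          rw [sum_comm]
          simp only [← mul_sum, sum_eP_mul]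
  refine le_of_mul_le_mul_left ?_ (Nat.cast_pos.mpr (NeZero.pos p) : (0 : ℝ) < p)
  calc (p : ℝ) * ‖T‖ = ‖(p : ℂ) * T‖ := by simp
    _ ≤ ∑ u, ‖eP p (φ u) * if g u = 0 then (p : ℂ) else 0‖ := hpT ▸ norm_sum_le _ _
    _ = p * #{u | g u = 0} := by
          simp only [norm_mul, norm_eP, one_mul, apply_ite norm, Complex.norm_natCast,
            norm_zero, sum_ite, sum_const, nsmul_eq_mul, zero_mul, add_zero, mul_comm]

end Characters

lemma norm_eM (M z : ℕ) : ‖eM M z‖ = 1 := by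
  rw [eM, Complex.norm_exp]
  simp

lemma sum_norm_sq_sum_le_card_mul {β V : Type*} [Fintype V] (t : Finset β)
    (F : β → V → ℂ) :
    ∑ w, ‖∑ b ∈ t, F b w‖ ^ 2 ≤ #t * ∑ b ∈ t, ∑ w, ‖F b w‖ ^ 2 := by
  rw [sum_comm, mul_sum]
  refine sum_le_sum fun w _ => ?_
  calc ‖∑ b ∈ t, F b w‖ ^ 2 ≤ (∑ b ∈ t, ‖F b w‖) ^ 2 := by
        gcongr
        exact norm_sum_le _ _
    _ ≤ #t * ∑ b ∈ t, ‖F b w‖ ^ 2 := sq_sum_le_card_mul_sum_sq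

lemma sum_norm_sq_sum_le_sum_sum_norm {ι V : Type*} [Fintype V] (I : Finset ι)
    (z : ι → V → ℂ) (γ : ι → ℂ) (hγ : ∀ n, ‖γ n‖ ≤ 1) :
    ∑ w, ‖∑ n ∈ I, z n w * γ n‖ ^ 2 ≤
      ∑ n ∈ I, ∑ n' ∈ I, ‖∑ w, z n w * starRingEnd ℂ (z n' w)‖ := by
  have hpoint (w : V) : (‖∑ n ∈ I, z n w * γ n‖ ^ 2 : ℂ) = ∑ n ∈ I, ∑ n' ∈ I,
      γ n * starRingEnd ℂ (γ n') * (z n w * starRingEnd ℂ (z n' w)) := by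
    rw [← Complex.mul_conj', map_sum, sum_mul_sum]
    refine sum_congr rfl fun n _ => sum_congr rfl fun n' _ => ?_
    rw [map_mul]
    ring
  have hexpand : ∑ w, ‖∑ n ∈ I, z n w * γ n‖ ^ 2 = (∑ n ∈ I, ∑ n' ∈ I,
      γ n * starRingEnd ℂ (γ n') * ∑ w, z n w * starRingEnd ℂ (z n' w)).re := by
    calc ∑ w, ‖∑ n ∈ I, z n w * γ n‖ ^ 2
        = ∑ w, (∑ n ∈ I, ∑ n' ∈ I,
            γ n * starRingEnd ℂ (γ n') * (z n w * starRingEnd ℂ (z n' w))).re := by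
          refine sum_congr rfl fun w _ => ?_
          rw [← hpoint w]
          norm_cast
      _ = _ := by
          rw [← Complex.re_sum, sum_comm]
          simp_rw [mul_sum]
          exact congr_arg Complex.re (sum_congr rfl fun n _ => sum_comm)
  rw [hexpand]
  refine (Complex.re_le_norm _).trans ((norm_sum_le _ _).trans (sum_le_sum fun n _ =>
    (norm_sum_le _ _).trans (sum_le_sum fun n' _ => ?_)))
  rw [norm_mul, norm_mul, RCLike.norm_conj]
  exact mul_le_of_le_one_left (norm_nonneg _) (mul_le_one₀ (hγ n) (norm_nonneg _) (hγ n'))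

section SupportLE

variable {R σ : Type*} [CommSemiring R]

def SupportLE (P : MvPolynomial σ R) (Δ : σ →₀ ℕ) : Prop :=
  ∀ d ∈ P.support, d ≤ Δ

lemma supportLE_monomial (d : σ →₀ ℕ) (c : R) : SupportLE (monomial d c) d := by
  classical
  intro e he
  rw [mem_singleton.mp (support_monomial_subset he)]

lemma supportLE_C (c : R) : SupportLE (C c : MvPolynomial σ R) 0 := supportLE_monomial 0 c

lemma supportLE_X (i : σ) : SupportLE (X i : MvPolynomial σ R) (Finsupp.single i 1) :=
  supportLE_monomial _ _

namespace SupportLE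

variable {P Q : MvPolynomial σ R} {Δ Δ' : σ →₀ ℕ}

lemma mono (h : SupportLE P Δ) (hle : Δ ≤ Δ') : SupportLE P Δ' :=
  fun d hd => (h d hd).trans hle

lemma add (hP : SupportLE P Δ) (hQ : SupportLE Q Δ) : SupportLE (P + Q) Δ := by
  classical
  intro d hd
  rcases mem_union.mp (support_add hd) with h | h
  exacts [hP d h, hQ d h]

lemma sum {ι : Type*} (t : Finset ι) {f : ι → MvPolynomial σ R}
    (h : ∀ j ∈ t, SupportLE (f j) Δ) : SupportLE (∑ j ∈ t, f j) Δ := by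
  classical
  intro d hd
  obtain ⟨j, hj, hdj⟩ := mem_biUnion.mp (support_sum hd)
  exact h j hj d hdj

lemma mul (hP : SupportLE P Δ) (hQ : SupportLE Q Δ') : SupportLE (P * Q) (Δ + Δ') := by
  classical
  intro d hd
  obtain ⟨a, ha, b, hb, rfl⟩ := mem_add.mp (support_mul P Q hd)
  exact add_le_add (hP a ha) (hQ b hb)

lemma prod {ι : Type*} (t : Finset ι) {f : ι → MvPolynomial σ R} {Δf : ι → σ →₀ ℕ}
    (h : ∀ j ∈ t, SupportLE (f j) (Δf j)) :
    SupportLE (∏ j ∈ t, f j) (∑ j ∈ t, Δf j) := by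
  classical
  induction t using Finset.induction_on with
  | empty => simpa using supportLE_C (1 : R)
  | insert a t hat ih =>
    rw [prod_insert hat, sum_insert hat]
    exact (h a (mem_insert_self a t)).mul (ih fun j hj => h j (mem_insert_of_mem hj))

lemma pow (h : SupportLE P Δ) (k : ℕ) : SupportLE (P ^ k) (k • Δ) := by
  simpa using prod (range k) fun _ _ => h

lemma divMonomial (h : SupportLE P Δ) (e : σ →₀ ℕ) : SupportLE (P.divMonomial e) (Δ - e) :=
  fun d hd => le_tsub_of_add_le_left
    (h _ (mem_support_iff.mpr (coeff_divMonomial e P d ▸ mem_support_iff.mp hd)))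

lemma totalDegree_le (h : SupportLE P Δ) : P.totalDegree ≤ Δ.degree :=
  Finset.sup_le fun d hd => Finsupp.degree_mono (h d hd)

lemma notMem_vars {i : σ} (h : SupportLE P Δ) (hi : Δ i = 0) : i ∉ P.vars := by
  classical
  rw [mem_vars_iff_mem_support]
  rintro ⟨d, hd, hid⟩
  exact Finsupp.mem_support_iff.mp hid (Nat.eq_zero_of_le_zero (hi ▸ h d hd i))

lemma coeff_mul (hP : SupportLE P Δ) (hQ : SupportLE Q Δ') :
    coeff (Δ + Δ') (P * Q) = coeff Δ P * coeff Δ' Q := by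
  classical
  rw [MvPolynomial.coeff_mul, sum_eq_single (Δ, Δ')]
  · rintro ⟨a, b⟩ hab hne
    by_contra hc
    obtain ⟨ha, hb⟩ := ne_zero_and_ne_zero_of_mul hc
    refine hne (Prod.ext_iff.mpr ((add_eq_add_iff_eq_and_eq ?_ ?_).mp (mem_antidiagonal.mp hab)))
    exacts [hP a (mem_support_iff.mpr ha), hQ b (mem_support_iff.mpr hb)]
  · simp

lemma coeff_prod {ι : Type*} (t : Finset ι) {f : ι → MvPolynomial σ R}
    {Δf : ι → σ →₀ ℕ} (h : ∀ j ∈ t, SupportLE (f j) (Δf j)) :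
    coeff (∑ j ∈ t, Δf j) (∏ j ∈ t, f j) = ∏ j ∈ t, coeff (Δf j) (f j) := by
  classical
  induction t using Finset.induction_on with
  | empty => simp
  | insert a t hat ih =>
    have ht : ∀ j ∈ t, SupportLE (f j) (Δf j) := fun j hj => h j (mem_insert_of_mem hj)
    rw [prod_insert hat, sum_insert hat, (h a (mem_insert_self a t)).coeff_mul (prod t ht),
      ih ht, prod_insert hat]

lemma coeff_pow (h : SupportLE P Δ) (k : ℕ) : coeff (k • Δ) (P ^ k) = coeff Δ P ^ k := by
  simpa using coeff_prod (range k) fun _ _ => h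

end SupportLE

lemma SupportLE.sub {R σ : Type*} [CommRing R] {P Q : MvPolynomial σ R} {Δ : σ →₀ ℕ}
    (hP : SupportLE P Δ) (hQ : SupportLE Q Δ) : SupportLE (P - Q) Δ := by
  classical
  intro d hd
  rcases mem_union.mp (support_sub σ P Q hd) with h | h
  exacts [hP d h, hQ d h]

lemma bind₁_eq_sum_prod {τ : Type*} [Fintype σ] (f : σ → MvPolynomial τ R)
    (P : MvPolynomial σ R) :
    bind₁ f P = ∑ d ∈ P.support, C (coeff d P) * ∏ j, f j ^ d j := by
  rw [bind₁, aeval_def, eval₂_eq', algebraMap_eq]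

variable {τ : Type*} [Fintype σ] {f : σ → MvPolynomial τ R} {Δf : σ → τ →₀ ℕ}
  {P : MvPolynomial σ R} {Δ : σ →₀ ℕ}

lemma supportLE_C_mul_prod_pow (hf : ∀ j, SupportLE (f j) (Δf j)) (d : σ →₀ ℕ) (c : R) :
    SupportLE (C c * ∏ j, f j ^ d j) (∑ j, d j • Δf j) := by
  simpa using (supportLE_C c).mul (SupportLE.prod univ fun j _ => (hf j).pow (d j))

lemma SupportLE.bind₁ (hf : ∀ j, SupportLE (f j) (Δf j)) (hP : SupportLE P Δ) :
    SupportLE (MvPolynomial.bind₁ f P) (∑ j, Δ j • Δf j) := by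
  rw [bind₁_eq_sum_prod]
  refine SupportLE.sum _ fun d hd => (supportLE_C_mul_prod_pow hf d _).mono ?_
  exact sum_le_sum fun j _ => nsmul_le_nsmul_left zero_le (hP d hd j)

lemma SupportLE.coeff_bind₁ (hf : ∀ j, SupportLE (f j) (Δf j))
    (hinj : Function.Injective fun d : σ →₀ ℕ => ∑ j, d j • Δf j)
    (hP : SupportLE P Δ) :
    coeff (∑ j, Δ j • Δf j) (MvPolynomial.bind₁ f P) =
      coeff Δ P * ∏ j, coeff (Δf j) (f j) ^ Δ j := by
  classical
  rw [bind₁_eq_sum_prod, coeff_sum, sum_eq_single Δ]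
  · rw [coeff_C_mul, SupportLE.coeff_prod univ fun j _ => (hf j).pow (Δ j)]
    simp only [(hf _).coeff_pow]
  · intro d hd hne
    by_contra hc
    have hle := supportLE_C_mul_prod_pow hf d (coeff d P) _ (mem_support_iff.mpr hc)
    have hge : ∑ j, d j • Δf j ≤ ∑ j, Δ j • Δf j :=
      sum_le_sum fun j _ => nsmul_le_nsmul_left zero_le (hP d hd j)
    exact hne (hinj (le_antisymm hge hle))
  · intro hΔ
    rw [notMem_support_iff.mp hΔ, C_0, zero_mul, coeff_zero]

end SupportLE

lemma MvPolynomial.eval_bind₁ {R σ τ : Type*} [CommSemiring R] (x : τ → R)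
    (g : σ → MvPolynomial τ R) (φ : MvPolynomial σ R) :
    eval x (bind₁ g φ) = eval (fun i => eval x (g i)) φ :=
  eval₂Hom_bind₁ (RingHom.id R) x g φ

section EvalShift

variable {R σ : Type*} [CommRing R]

lemma eval_add_single_of_notMem_vars [DecidableEq σ] {Q : MvPolynomial σ R} {i : σ}
    (hi : i ∉ Q.vars) (u : σ → R) (x : R) : eval (u + Pi.single i x) Q = eval u Q := by
  refine hom_congr_vars (by ext; simp) (fun j hj _ => ?_) rfl
  have hji : j ≠ i := fun h => hi (h ▸ hj)
  simp [hji]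

lemma notMem_vars_modMonomial_single (P : MvPolynomial σ R) (i : σ) :
    i ∉ (P.modMonomial (Finsupp.single i 1)).vars := by
  rw [mem_vars_iff_mem_support]
  rintro ⟨d, hd, hid⟩
  refine mem_support_iff.mp hd (coeff_modMonomial_of_le _ ?_)
  exact Finsupp.single_le_iff.mpr (Nat.one_le_iff_ne_zero.mpr (Finsupp.mem_support_iff.mp hid))

lemma eval_add_single_of_notMem_vars_divMonomial [DecidableEq σ] {P : MvPolynomial σ R} {i : σ}
    (hi : i ∉ (P.divMonomial (Finsupp.single i 1)).vars) (u : σ → R) (x : R) :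
    eval (u + Pi.single i x) P = eval u P + x * eval u (P.divMonomial (Finsupp.single i 1)) := by
  have hP (v : σ → R) : eval v P = v i * eval v (P.divMonomial (Finsupp.single i 1)) +
      eval v (P.modMonomial (Finsupp.single i 1)) := by
    conv_lhs => rw [← divMonomial_add_modMonomial_single P i]
    simp only [map_add, map_mul, eval_X]
  rw [hP, hP u, eval_add_single_of_notMem_vars hi,
    eval_add_single_of_notMem_vars (notMem_vars_modMonomial_single P i)]
  simp only [Pi.add_apply, Pi.single_eq_same]
  ring

end EvalShift

lemma card_zeros_le_totalDegree_mul {R : Type*} [CommRing R] [IsDomain R] [Fintype R]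
    [DecidableEq R] {n : ℕ} {Q : MvPolynomial (Fin (n + 1)) R} (hQ : Q ≠ 0) :
    #{u | eval u Q = 0} ≤ Q.totalDegree * Fintype.card R ^ n := by
  have hsz := schwartz_zippel_totalDegree hQ (univ : Finset R)
  rw [Fintype.piFinset_univ, card_univ] at hsz
  have hq : (0 : ℚ≥0) < Fintype.card R := by exact_mod_cast Fintype.card_pos
  rw [div_le_div_iff₀ (pow_pos hq _) hq, pow_succ, ← mul_assoc] at hsz
  exact_mod_cast le_of_mul_le_mul_right hsz hq

lemma injective_sum_nsmul_of_unitriangular {ι : Type*} [Fintype ι] [LinearOrder ι]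
    (Δ : ι → ι →₀ ℕ) (hlt : ∀ j l, l < j → Δ j l = 0) (hdiag : ∀ j, Δ j j = 1) :
    Function.Injective fun d : ι →₀ ℕ => ∑ j, d j • Δ j := by
  set A : Matrix ι ι ℤ := fun j l => Δ j l
  have hA : IsUnit A := by
    have htri : A.IsUpperTriangular := fun j l h => by simp [A, hlt j l h]
    rw [Matrix.isUnit_iff_isUnit_det, Matrix.det_of_isUpperTriangular htri]
    simp [A, hdiag]
  intro d d' h
  have hcast : (fun j => (d j : ℤ)) = fun j => (d' j : ℤ) := by
    refine Matrix.vecMul_injective_of_isUnit hA (funext fun l => ?_)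
    have := DFunLike.congr_fun h l
    simp only [Finsupp.coe_finsetSum, Finset.sum_apply, Finsupp.smul_apply, smul_eq_mul] at this
    simp only [Matrix.vecMul, dotProduct, A]
    exact_mod_cast this
  ext j
  exact_mod_cast congr_fun hcast j

section Exponents

variable (m : ℕ) (s : ℕ → ℕ → ℕ)

/- `leadExp m s i` is the exponent of the leading monomial `X_i ∏_{j > i} X_j^{s_{i,j}}` of
`F_i = X_i G_i + H_i`, and `iterExp m s k i` is that of the iterate `F_i^{(k)}`. -/
noncomputable def rowExp (i : Fin (m + 1)) : Fin (m + 1) →₀ ℕ :=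
  Finsupp.equivFunOnFinite.symm fun l => if i < l then s i l else 0

noncomputable def leadExp (i : Fin (m + 1)) : Fin (m + 1) →₀ ℕ :=
  Finsupp.single i 1 + rowExp m s i

noncomputable def iterExp : ℕ → Fin (m + 1) → Fin (m + 1) →₀ ℕ
  | 0 => fun i => Finsupp.single i 1
  | k + 1 => fun i => ∑ j, leadExp m s i j • iterExp k j

noncomputable def expBound : ℕ := ∑ i, (leadExp m s i).degree

variable {m s}

lemma rowExp_apply (i l : Fin (m + 1)) : rowExp m s i l = if i < l then s i l else 0 := rfl

lemma rowExp_of_le {i l : Fin (m + 1)} (h : l ≤ i) : rowExp m s i l = 0 := by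
  simp [rowExp_apply, h.not_gt]

lemma leadExp_self (i : Fin (m + 1)) : leadExp m s i i = 1 := by
  simp [leadExp, rowExp_apply]

lemma leadExp_of_lt {i l : Fin (m + 1)} (h : i < l) : leadExp m s i l = s i l := by
  simp [leadExp, rowExp_apply, h, h.ne']

lemma leadExp_of_gt {i l : Fin (m + 1)} (h : l < i) : leadExp m s i l = 0 := by
  simp [leadExp, rowExp_apply, h.ne, h.not_gt]

lemma iterExp_succ_apply (k : ℕ) (i l : Fin (m + 1)) :
    iterExp m s (k + 1) i l = ∑ j, leadExp m s i j * iterExp m s k j l := by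
  simp [iterExp, Finsupp.finsetSum_apply]

lemma iterExp_of_gt {i l : Fin (m + 1)} (h : l < i) (k : ℕ) : iterExp m s k i l = 0 := by
  induction k generalizing i with
  | zero => simp [iterExp, h.ne]
  | succ k ih =>
    rw [iterExp_succ_apply]
    refine sum_eq_zero fun j _ => ?_
    rcases lt_or_ge j i with hj | hj
    · rw [leadExp_of_gt hj, zero_mul]
    · rw [ih (h.trans_le hj), mul_zero]

lemma iterExp_self (k : ℕ) (i : Fin (m + 1)) : iterExp m s k i i = 1 := by
  induction k generalizing i with
  | zero => simp [iterExp]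
  | succ k ih =>
    rw [iterExp_succ_apply, sum_eq_single i, leadExp_self, ih, one_mul]
    · intro j _ hji
      rcases hji.lt_or_gt with hj | hj
      · rw [leadExp_of_gt hj, zero_mul]
      · rw [iterExp_of_gt hj, mul_zero]
    · simp

lemma injective_sum_nsmul_iterExp (k : ℕ) :
    Function.Injective fun d : Fin (m + 1) →₀ ℕ => ∑ j, d j • iterExp m s k j :=
  injective_sum_nsmul_of_unitriangular _ (fun _ _ h => iterExp_of_gt h k) (iterExp_self k)

lemma mul_le_iterExp {i l : Fin (m + 1)} (h : i < l) (k : ℕ) :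
    k * s i l ≤ iterExp m s k i l := by
  induction k with
  | zero => simp
  | succ k ih =>
    rw [iterExp_succ_apply]
    calc (k + 1) * s i l
        ≤ leadExp m s i i * iterExp m s k i l + leadExp m s i l * iterExp m s k l l := by
          rw [leadExp_self, leadExp_of_lt h, iterExp_self]
          linarith
      _ ≤ _ := add_le_sum (f := fun j => leadExp m s i j * iterExp m s k j l)
          (fun _ _ => zero_le) (mem_univ i) (mem_univ l) h.ne

lemma iterExp_sub_single_ne_zero {i l : Fin (m + 1)} (h : i < l) (hs : s i l ≠ 0) {k : ℕ}
    (hk : k ≠ 0) : iterExp m s k i - Finsupp.single i 1 ≠ 0 := by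
  intro hzero
  have hl : iterExp m s k i l = 0 := by simpa [h.ne] using DFunLike.congr_fun hzero l
  have := hl ▸ mul_le_iterExp (s := s) h k
  simp_all

lemma degree_leadExp_le (i : Fin (m + 1)) : (leadExp m s i).degree ≤ expBound m s :=
  single_le_sum (f := fun i => (leadExp m s i).degree) (fun _ _ => zero_le) (mem_univ i)

lemma one_le_expBound : 1 ≤ expBound m s :=
  calc 1 = (Finsupp.single (0 : Fin (m + 1)) 1).degree := (Finsupp.degree_single _ _).symm
    _ ≤ (leadExp m s 0).degree := Finsupp.degree_mono le_self_add
    _ ≤ expBound m s := degree_leadExp_le 0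

lemma degree_iterExp_succ (k : ℕ) (i : Fin (m + 1)) :
    (iterExp m s (k + 1) i).degree = ∑ j, leadExp m s i j * (iterExp m s k j).degree := by
  simp [iterExp, map_sum]

lemma sum_erase_leadExp_mul_le (i : Fin (m + 1)) {f : Fin (m + 1) → ℕ} {b : ℕ}
    (hf : ∀ j, i < j → f j ≤ b) :
    ∑ j ∈ univ.erase i, leadExp m s i j * f j ≤ expBound m s * b :=
  calc ∑ j ∈ univ.erase i, leadExp m s i j * f j ≤ ∑ j, leadExp m s i j * b := by
        refine (sum_le_sum fun j hj => ?_).trans (sum_le_sum_of_subset (subset_univ _))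
        rcases (ne_of_mem_erase hj).lt_or_gt with hji | hji
        · simp [leadExp_of_gt hji]
        · exact Nat.mul_le_mul_left _ (hf j hji)
    _ = (leadExp m s i).degree * b := by rw [← sum_mul, Finsupp.degree_eq_sum]
    _ ≤ expBound m s * b := Nat.mul_le_mul_right _ (degree_leadExp_le i)

lemma degree_iterExp_le (k : ℕ) (i : Fin (m + 1)) :
    (iterExp m s k i).degree ≤ (expBound m s * (k + 1)) ^ (m - i) := by
  induction k generalizing i with
  | zero => simpa [iterExp] using one_le_pow₀ one_le_expBound
  | succ k ih =>
    set B := expBound m s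
    have hA : 1 ≤ B * (k + 1) := one_le_mul_of_one_le_of_one_le one_le_expBound (by omega)
    rw [degree_iterExp_succ, ← add_sum_erase _ _ (mem_univ i), leadExp_self, one_mul]
    rcases Nat.eq_zero_or_pos (m - i) with hi | hi
    · have hrest := sum_erase_leadExp_mul_le (s := s) i (b := 0)
        (f := fun j => (iterExp m s k j).degree) fun j hj => by
          have := Fin.lt_def.mp hj; have := j.isLt; omega
      simpa [hi] using add_le_add (ih i) hrest
    obtain ⟨e, he⟩ : ∃ e, m - i = e + 1 := ⟨m - i - 1, by omega⟩
    have hrest := sum_erase_leadExp_mul_le (s := s) i (b := (B * (k + 1)) ^ e)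
      (f := fun j => (iterExp m s k j).degree) fun j hj =>
        (ih j).trans (Nat.pow_le_pow_right hA (by have := Fin.lt_def.mp hj; omega))
    calc _ ≤ (B * (k + 1)) ^ (e + 1) + B * (B * (k + 1)) ^ e := add_le_add (he ▸ ih i) hrest
      _ = (B * (k + 1)) ^ e * (B * (k + 1 + 1)) := by ring
      _ ≤ (B * (k + 1 + 1)) ^ e * (B * (k + 1 + 1)) := by gcongr; omega
      _ = (B * (k + 1 + 1)) ^ (m - i) := by rw [he, pow_succ]

end Exponents

section Systems

variable {R : Type*} [CommRing R] {m : ℕ} {s : ℕ → ℕ → ℕ}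
  {F : Fin (m + 1) → MvPolynomial (Fin (m + 1)) R}

lemma prod_X_pow_eq_monomial_rowExp (i : Fin (m + 1)) :
    ∏ j ∈ univ.filter (i < ·), (X j : MvPolynomial (Fin (m + 1)) R) ^ s i j =
      monomial (rowExp m s i) 1 := by
  rw [monomial_eq, C_1, one_mul, Finsupp.prod_fintype _ _ fun _ => pow_zero _, prod_filter]
  exact prod_congr rfl fun j _ => by split_ifs <;> simp [rowExp_apply, *]

lemma IsFSystem.supportLE_and_coeff_ne_zero_of_lt (hF : IsFSystem m s F) {i : Fin (m + 1)}
    (hi : (i : ℕ) < m) :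
    SupportLE (F i) (leadExp m s i) ∧ coeff (leadExp m s i) (F i) ≠ 0 := by
  classical
  obtain ⟨G, H, Gt, g, hg, hFi, hGsupp, hHsupp, hGeq, hGt, hHle⟩ := hF.2 i hi
  rw [prod_X_pow_eq_monomial_rowExp, C_mul_monomial, mul_one] at hGeq
  have hG : SupportLE G (rowExp m s i) := by
    intro d hd l
    by_cases hil : i < l
    · rw [hGeq] at hd
      rcases mem_union.mp (support_add hd) with h | h
      · rw [mem_singleton.mp (support_monomial_subset h)]
      · simpa [rowExp_apply, hil] using (hGt d h l hil).le
    · simp [hGsupp d hd l (not_lt.mp hil)]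
  have hGcoeff : coeff (rowExp m s i) G = g := by
    have hnext : i < ⟨i + 1, by omega⟩ := Fin.lt_def.mpr (Nat.lt_succ_self _)
    have hGt0 : coeff (rowExp m s i) Gt = 0 := by
      by_contra h
      simpa [rowExp_apply, hnext] using hGt _ (mem_support_iff.mpr h) _ hnext
    rw [hGeq, coeff_add, coeff_monomial, if_pos rfl, hGt0, add_zero]
  have hH : SupportLE H (leadExp m s i) := by
    intro d hd l
    by_cases hil : i < l
    · exact leadExp_of_lt hil ▸ hHle d hd l hil
    · simp [hHsupp d hd l (not_lt.mp hil)]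
  have hH0 : coeff (leadExp m s i) H = 0 := by
    by_contra h
    simpa [leadExp_self] using hHsupp _ (mem_support_iff.mpr h) i le_rfl
  refine ⟨hFi ▸ ((supportLE_X i).mul hG).add hH, ?_⟩
  rw [hFi, coeff_add, hH0, add_zero, leadExp, coeff_X_mul, hGcoeff]
  exact hg

lemma IsFSystem.supportLE_and_coeff_ne_zero_last (hF : IsFSystem m s F) :
    SupportLE (F (Fin.last m)) (leadExp m s (Fin.last m)) ∧
      coeff (leadExp m s (Fin.last m)) (F (Fin.last m)) ≠ 0 := by
  classical
  obtain ⟨g, h, hg, hlast⟩ := hF.1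
  have hlead : leadExp m s (Fin.last m) = Finsupp.single (Fin.last m) 1 := by
    ext l
    simp [leadExp, rowExp_of_le (Fin.le_last l)]
  rw [hlead, hlast, C_mul_X_eq_monomial]
  refine ⟨(supportLE_monomial _ _).add ((supportLE_C h).mono zero_le), ?_⟩
  have hne : (0 : Fin (m + 1) →₀ ℕ) ≠ Finsupp.single (Fin.last m) 1 :=
    (Finsupp.single_ne_zero.mpr one_ne_zero).symm
  simpa [coeff_monomial, coeff_C, hne] using hg

lemma IsFSystem.supportLE_and_coeff_ne_zero (hF : IsFSystem m s F) (i : Fin (m + 1)) :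
    SupportLE (F i) (leadExp m s i) ∧ coeff (leadExp m s i) (F i) ≠ 0 := by
  by_cases hi : (i : ℕ) < m
  · exact hF.supportLE_and_coeff_ne_zero_of_lt hi
  · obtain rfl : i = Fin.last m := Fin.ext (by simp; omega)
    exact hF.supportLE_and_coeff_ne_zero_last

end Systems

section Iterates

variable {R : Type*} [CommRing R] {m : ℕ} {s : ℕ → ℕ → ℕ}
  {Fs : ℕ → Fin (m + 1) → MvPolynomial (Fin (m + 1)) R}

lemma iterSys_supportLE_and_coeff_ne_zero [IsDomain R]
    (hsys : ∀ k, 1 ≤ k → IsFSystem m s (Fs k)) (k : ℕ) (i : Fin (m + 1)) :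
    SupportLE (iterSys m Fs k i) (iterExp m s k i) ∧
      coeff (iterExp m s k i) (iterSys m Fs k i) ≠ 0 := by
  induction k generalizing i with
  | zero => simp [iterSys, iterExp, supportLE_X, coeff_X]
  | succ k ih =>
    have hF := (hsys (k + 1) (Nat.le_add_left 1 k)).supportLE_and_coeff_ne_zero i
    refine ⟨SupportLE.bind₁ (fun j => (ih j).1) hF.1, ?_⟩
    rw [iterSys, iterExp,
      SupportLE.coeff_bind₁ (fun j => (ih j).1) (injective_sum_nsmul_iterExp k) hF.1]
    exact mul_ne_zero hF.2 (prod_ne_zero_iff.mpr fun j _ => pow_ne_zero _ (ih j).2)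

lemma iterSys_add (n k : ℕ) (i : Fin (m + 1)) :
    iterSys m Fs (n + k) i = bind₁ (iterSys m Fs n) (iterSys m (fun t => Fs (n + t)) k i) := by
  induction k generalizing i with
  | zero => exact (bind₁_X_right _ i).symm
  | succ k ih =>
    change bind₁ (iterSys m Fs (n + k)) (Fs (n + k + 1) i) =
      bind₁ (iterSys m Fs n) (bind₁ (iterSys m (fun t => Fs (n + t)) k) (Fs (n + (k + 1)) i))
    rw [bind₁_bind₁, ← funext ih, add_assoc]

lemma bijective_eval_iterSys
    (hbij : ∀ k, 1 ≤ k → Function.Bijective fun (w : Fin (m + 1) → R) i => eval w (Fs k i))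
    (k : ℕ) : Function.Bijective fun (w : Fin (m + 1) → R) i => eval w (iterSys m Fs k i) := by
  induction k with
  | zero =>
    simp only [iterSys, eval_X]
    exact Function.bijective_id
  | succ k ih =>
    convert (hbij (k + 1) (Nat.le_add_left 1 k)).comp ih using 1
    ext w i
    simp [iterSys, eval_bind₁]

end Iterates

section CompleteSums

variable {p : ℕ} [Fact p.Prime] {m : ℕ} {s : ℕ → ℕ → ℕ}
  {Gs : ℕ → Fin (m + 1) → MvPolynomial (Fin (m + 1)) (ZMod p)}

lemma notMem_vars_divMonomial_iterSys (hsys : ∀ k, 1 ≤ k → IsFSystem m s (Gs k)) (k : ℕ)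
    (i : Fin (m + 1)) : i ∉ ((iterSys m Gs k i).divMonomial (Finsupp.single i 1)).vars :=
  ((iterSys_supportLE_and_coeff_ne_zero hsys k i).1.divMonomial _).notMem_vars
    (by simp [iterExp_self])

lemma divMonomial_iterSys_sub_C_one_ne_zero (hsys : ∀ k, 1 ≤ k → IsFSystem m s (Gs k))
    {i l : Fin (m + 1)} (h : i < l) (hs : s i l ≠ 0) {k : ℕ} (hk : k ≠ 0) :
    (iterSys m Gs k i).divMonomial (Finsupp.single i 1) - C 1 ≠ 0 := by
  obtain ⟨-, hcoeff⟩ := iterSys_supportLE_and_coeff_ne_zero hsys k i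
  have hle : Finsupp.single i 1 ≤ iterExp m s k i :=
    Finsupp.single_le_iff.mpr (iterExp_self k i).ge
  intro hzero
  have := congr_arg (coeff (iterExp m s k i - Finsupp.single i 1)) hzero
  rw [coeff_sub, coeff_C, if_neg (iterExp_sub_single_ne_zero h hs hk).symm, sub_zero,
    coeff_divMonomial, add_tsub_cancel_of_le hle, coeff_zero] at this
  exact hcoeff this

lemma totalDegree_divMonomial_iterSys_sub_C_one_le (hsys : ∀ k, 1 ≤ k → IsFSystem m s (Gs k))
    (k : ℕ) (i : Fin (m + 1)) :
    ((iterSys m Gs k i).divMonomial (Finsupp.single i 1) - C 1).totalDegree ≤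
      (expBound m s * (k + 1)) ^ m := by
  have hsupp := (iterSys_supportLE_and_coeff_ne_zero hsys k i).1
  have hQ := ((hsupp.divMonomial (Finsupp.single i 1)).mono tsub_le_self).sub
    ((supportLE_C 1).mono zero_le)
  calc _ ≤ (iterExp m s k i).degree := hQ.totalDegree_le
    _ ≤ (expBound m s * (k + 1)) ^ (m - i) := degree_iterExp_le k i
    _ ≤ (expBound m s * (k + 1)) ^ m :=
        Nat.pow_le_pow_right (one_le_mul_of_one_le_of_one_le one_le_expBound (by omega))
          (Nat.sub_le m i)

/- The phase is affine in `u_i`, `i = j₀.castSucc`: writing `F_i^{(k)} = X_i Λ + M` with `Λ`,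
`M` free of `X_i`, the terms `j < j₀` vanish and the terms `j > j₀` do not involve `X_i`. -/
lemma sum_mul_iterSys_sub_add_single (hsys : ∀ k, 1 ≤ k → IsFSystem m s (Gs k)) (k : ℕ)
    {a : Fin m → ZMod p} {j₀ : Fin m} (hbelow : ∀ j < j₀, a j = 0)
    (u : Fin (m + 1) → ZMod p) (x : ZMod p) :
    ∑ j, a j * (eval (u + Pi.single j₀.castSucc x) (iterSys m Gs k j.castSucc) -
        (u + Pi.single j₀.castSucc x : Fin (m + 1) → ZMod p) j.castSucc) =
      ∑ j, a j * (eval u (iterSys m Gs k j.castSucc) - u j.castSucc) +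
        x * (a j₀ * (eval u ((iterSys m Gs k j₀.castSucc).divMonomial
          (Finsupp.single j₀.castSucc 1)) - 1)) := by
  rw [← sub_eq_iff_eq_add', ← sum_sub_distrib, sum_eq_single j₀]
  · rw [eval_add_single_of_notMem_vars_divMonomial (notMem_vars_divMonomial_iterSys hsys k _)]
    simp only [Pi.add_apply, Pi.single_eq_same]
    ring
  · intro j _ hj
    rcases hj.lt_or_gt with hj | hj
    · simp [hbelow j hj]
    · have hij : j₀.castSucc < j.castSucc := Fin.castSucc_lt_castSucc_iff.mpr hj
      have hvars := (iterSys_supportLE_and_coeff_ne_zero hsys k j.castSucc).1.notMem_vars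
        (iterExp_of_gt hij k)
      rw [eval_add_single_of_notMem_vars hvars]
      simp [hij.ne']
  · simp

lemma norm_sum_eP_iterSys_sub_le (hsys : ∀ k, 1 ≤ k → IsFSystem m s (Gs k))
    (hs : ∀ i < m, s i (i + 1) ≠ 0) {k : ℕ} (hk : k ≠ 0) {a : Fin m → ZMod p}
    (ha : a ≠ 0) :
    ‖∑ u, eP p (∑ j, a j * (eval u (iterSys m Gs k j.castSucc) - u j.castSucc))‖ ≤
      ((expBound m s * (k + 1)) ^ m * p ^ m : ℕ) := by
  classical
  obtain ⟨j₀, hj₀ : a j₀ ≠ 0, hmin⟩ :=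
    wellFounded_lt.has_min {j | a j ≠ 0} (Function.ne_iff.mp ha)
  have hbelow (j : Fin m) (hj : j < j₀) : a j = 0 := not_not.mp fun h => hmin j h hj
  set Q := (iterSys m Gs k j₀.castSucc).divMonomial (Finsupp.single j₀.castSucc 1) - C 1
  have hQ : Q ≠ 0 := divMonomial_iterSys_sub_C_one_ne_zero hsys Fin.castSucc_lt_succ
    (by simpa using hs j₀ j₀.isLt) hk
  have hzeros : #{u | a j₀ * (eval u (Q + C 1) - 1) = 0} = #{u | eval u Q = 0} := by
    simp [hj₀]
  calc _ ≤ ((#{u | a j₀ * (eval u (Q + C 1) - 1) = 0} : ℕ) : ℝ) := by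
        refine norm_sum_eP_le_card_zeros_of_affine j₀.castSucc _ _ fun u x => ?_
        simpa [Q] using sum_mul_iterSys_sub_add_single hsys k hbelow u x
    _ ≤ ((expBound m s * (k + 1)) ^ m * p ^ m : ℕ) := by
        refine Nat.cast_le.mpr (hzeros ▸ (card_zeros_le_totalDegree_mul hQ).trans ?_)
        rw [ZMod.card]
        exact Nat.mul_le_mul_right _ (totalDegree_divMonomial_iterSys_sub_C_one_le hsys k _)

end CompleteSums

section MeanSquare

variable {p : ℕ} [Fact p.Prime] {m : ℕ} {s : ℕ → ℕ → ℕ}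
  {Fs : ℕ → Fin (m + 1) → MvPolynomial (Fin (m + 1)) (ZMod p)} {a : Fin m → ZMod p}

variable (m Fs a) in
noncomputable def iterPhase (n : ℕ) (w : Fin (m + 1) → ZMod p) : ZMod p :=
  ∑ j, a j * eval w (iterSys m Fs n j.castSucc)

lemma norm_sum_eP_iterPhase_sub_le (hsys : ∀ k, 1 ≤ k → IsFSystem m s (Fs k))
    (hbij : ∀ k, 1 ≤ k →
      Function.Bijective fun (w : Fin (m + 1) → ZMod p) i => eval w (Fs k i))
    (hs : ∀ i < m, s i (i + 1) ≠ 0) (ha : a ≠ 0) {n n' : ℕ} (h : n' < n) :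
    ‖∑ w, eP p (iterPhase m Fs a n w - iterPhase m Fs a n' w)‖ ≤
      ((expBound m s * (n - n' + 1)) ^ m * p ^ m : ℕ) := by
  obtain ⟨k, rfl⟩ := Nat.exists_eq_add_of_lt h
  have hsys' : ∀ t, 1 ≤ t → IsFSystem m s (Fs (n' + t)) := fun t ht => hsys _ (by omega)
  have hshift (w : Fin (m + 1) → ZMod p) :
      iterPhase m Fs a (n' + k + 1) w - iterPhase m Fs a n' w =
        ∑ j, a j * (eval (fun i => eval w (iterSys m Fs n' i))
          (iterSys m (fun t => Fs (n' + t)) (k + 1) j.castSucc) -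
            eval w (iterSys m Fs n' j.castSucc)) := by
    simp only [iterPhase, ← sum_sub_distrib, mul_sub, add_assoc, iterSys_add, eval_bind₁]
  simp only [hshift]
  rw [Fintype.sum_bijective _ (bijective_eval_iterSys hbij n') _
    (fun u => eP p (∑ j, a j * (eval u (iterSys m (fun t => Fs (n' + t)) (k + 1) j.castSucc) -
      u j.castSucc))) fun _ => rfl]
  simpa [add_assoc] using norm_sum_eP_iterSys_sub_le hsys' hs k.succ_ne_zero ha

lemma sum_norm_sq_sum_eP_iterPhase_le_of_subset_Ico (hsys : ∀ k, 1 ≤ k → IsFSystem m s (Fs k))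
    (hbij : ∀ k, 1 ≤ k →
      Function.Bijective fun (w : Fin (m + 1) → ZMod p) i => eval w (Fs k i))
    (hs : ∀ i < m, s i (i + 1) ≠ 0) (ha : a ≠ 0) {I : Finset ℕ} {c L : ℕ}
    (hI : I ⊆ Ico c (c + L)) (γ : ℕ → ℂ) (hγ : ∀ n, ‖γ n‖ ≤ 1) :
    ∑ w, ‖∑ n ∈ I, eP p (iterPhase m Fs a n w) * γ n‖ ^ 2 ≤
      L * p ^ (m + 1) + L ^ 2 * ((expBound m s * L) ^ m * p ^ m : ℕ) := by
  set D : ℝ := (((expBound m s * L) ^ m * p ^ m : ℕ) : ℝ)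
  have hcard : (#I : ℝ) ≤ L := by
    exact_mod_cast (card_le_card hI).trans (by rw [Nat.card_Ico]; omega)
  have hoff {n n' : ℕ} (hn : n ∈ I) (hn' : n' ∈ I) (h : n' < n) :
      ‖∑ w, eP p (iterPhase m Fs a n w - iterPhase m Fs a n' w)‖ ≤ D := by
    have := mem_Ico.mp (hI hn)
    have := mem_Ico.mp (hI hn')
    refine (norm_sum_eP_iterPhase_sub_le hsys hbij hs ha h).trans (Nat.cast_le.mpr ?_)
    gcongr
    omega
  have hpair (n n' : ℕ) (hn : n ∈ I) (hn' : n' ∈ I) :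
      ‖∑ w, eP p (iterPhase m Fs a n w) * starRingEnd ℂ (eP p (iterPhase m Fs a n' w))‖ ≤
        (if n' = n then (p : ℝ) ^ (m + 1) else 0) + D := by
    simp only [← eP_sub]
    rcases lt_trichotomy n' n with h | rfl | h
    · simpa [h.ne] using hoff hn hn' h
    · simp [eP_eq_stdAddChar, ZMod.card, D]
      positivity
    · rw [norm_sum_eP_sub_comm]
      simpa [h.ne'] using hoff hn' hn h
  calc ∑ w, ‖∑ n ∈ I, eP p (iterPhase m Fs a n w) * γ n‖ ^ 2
      ≤ ∑ n ∈ I, ∑ n' ∈ I, ((if n' = n then (p : ℝ) ^ (m + 1) else 0) + D) :=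
        (sum_norm_sq_sum_le_sum_sum_norm I _ γ hγ).trans
          (sum_le_sum fun n hn => sum_le_sum fun n' hn' => hpair n n' hn hn')
    _ = #I * p ^ (m + 1) + #I ^ 2 * D := by
        simp only [sum_add_distrib, sum_ite_eq', sum_const, nsmul_eq_mul]
        rw [sum_ite_of_true fun _ h => h, sum_const, nsmul_eq_mul]
        ring
    _ ≤ L * p ^ (m + 1) + L ^ 2 * D := by gcongr

lemma sum_norm_sq_sum_eP_iterPhase_le_of_pow_le (hsys : ∀ k, 1 ≤ k → IsFSystem m s (Fs k))
    (hbij : ∀ k, 1 ≤ k →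
      Function.Bijective fun (w : Fin (m + 1) → ZMod p) i => eval w (Fs k i))
    (hs : ∀ i < m, s i (i + 1) ≠ 0) (ha : a ≠ 0) (γ : ℕ → ℂ)
    (hγ : ∀ n, ‖γ n‖ ≤ 1) (N : ℕ) {L : ℕ} (hL : 1 ≤ L)
    (hLp : (L : ℝ) ^ (m + 1) ≤ p) :
    ∑ w, ‖∑ n ∈ range N, eP p (iterPhase m Fs a n w) * γ n‖ ^ 2 ≤
      (1 + expBound m s ^ m) * (((N / L + 1 : ℕ) : ℝ) ^ 2 * L * p ^ (m + 1)) := by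
  set K := N / L + 1
  set f := fun n w => eP p (iterPhase m Fs a n w) * γ n
  have hblocks (w : Fin (m + 1) → ZMod p) :
      ∑ n ∈ range N, f n w = ∑ b ∈ range K, ∑ n ∈ range N with n / L = b, f n w :=
    (sum_fiberwise_of_maps_to (fun n hn =>
      mem_range.mpr (Nat.lt_succ_of_le (Nat.div_le_div_right (mem_range.mp hn).le))) _).symm
  have hIco (b : ℕ) : {n ∈ range N | n / L = b} ⊆ Ico (b * L) (b * L + L) := by
    intro n hn
    obtain rfl := (mem_filter.mp hn).2
    exact mem_Ico.mpr ⟨Nat.div_mul_le_self n L, Nat.lt_div_mul_add hL⟩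
  have hsmall : (L : ℝ) ^ 2 * (((expBound m s * L) ^ m * p ^ m : ℕ) : ℝ) ≤
      expBound m s ^ m * (L * p ^ (m + 1)) := by
    push_cast
    calc (L : ℝ) ^ 2 * ((expBound m s * L) ^ m * p ^ m)
        = expBound m s ^ m * (L * p ^ m) * L ^ (m + 1) := by ring
      _ ≤ expBound m s ^ m * (L * p ^ m) * p := by gcongr
      _ = expBound m s ^ m * (L * p ^ (m + 1)) := by ring
  calc ∑ w, ‖∑ n ∈ range N, f n w‖ ^ 2
      = ∑ w, ‖∑ b ∈ range K, ∑ n ∈ range N with n / L = b, f n w‖ ^ 2 := by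
        simp only [hblocks]
    _ ≤ #(range K) *
          ∑ b ∈ range K, ∑ w, ‖∑ n ∈ range N with n / L = b, f n w‖ ^ 2 :=
        sum_norm_sq_sum_le_card_mul _ _
    _ ≤ K * ∑ b ∈ range K,
          (L * p ^ (m + 1) + L ^ 2 * (((expBound m s * L) ^ m * p ^ m : ℕ) : ℝ)) := by
        rw [card_range]
        gcongr with b
        exact sum_norm_sq_sum_eP_iterPhase_le_of_subset_Ico hsys hbij hs ha (hIco b) γ hγ
    _ ≤ (1 + expBound m s ^ m) * ((K : ℝ) ^ 2 * L * p ^ (m + 1)) := by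
        rw [sum_const, card_range, nsmul_eq_mul]
        nlinarith [hsmall, sq_nonneg (K : ℝ)]

end MeanSquare

lemma sq_cast_div_add_one_mul_le {N L : ℕ} {X : ℝ} (hLN : L ≤ N) (hX : 0 < X)
    (hXL : X ≤ 2 * L) : ((N / L + 1 : ℕ) : ℝ) ^ 2 * L ≤ 8 * N ^ 2 / X := by
  have hL0 : (0 : ℝ) < L := by linarith
  have hK : ((N / L + 1 : ℕ) : ℝ) ≤ 2 * N / L := by
    have h1 : (1 : ℝ) ≤ N / L := (one_le_div hL0).mpr (by exact_mod_cast hLN)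
    have h2 : ((N / L : ℕ) : ℝ) ≤ N / L := Nat.cast_div_le
    push_cast
    rw [mul_div_assoc]
    linarith
  calc ((N / L + 1 : ℕ) : ℝ) ^ 2 * L ≤ (2 * N / L) ^ 2 * L := by gcongr
    _ = 4 * (N : ℝ) ^ 2 / L := by field_simp; ring
    _ ≤ 4 * (N : ℝ) ^ 2 / (X / 2) := by gcongr; linarith
    _ = 8 * N ^ 2 / X := by field_simp; ring

lemma exists_blockLength (m N : ℕ) (hN : 0 < N) {x : ℝ} (hx : 1 ≤ x) :
    ∃ L : ℕ, 1 ≤ L ∧ (L : ℝ) ^ (m + 1) ≤ x ∧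
      ((N / L + 1 : ℕ) : ℝ) ^ 2 * L * x ^ (m + 1) ≤
        8 * (if (N : ℝ) ≤ x ^ ((1 : ℝ) / ((m : ℝ) + 1))
          then (N : ℝ) * x ^ ((m : ℝ) + 1)
          else (N : ℝ) ^ 2 * x ^ (((m : ℝ) * ((m : ℝ) + 2)) / ((m : ℝ) + 1))) := by
  set X := x ^ ((1 : ℝ) / ((m : ℝ) + 1))
  have hx0 : 0 < x := by linarith
  have hX1 : 1 ≤ X := Real.one_le_rpow hx (by positivity)
  have hpow_le {L : ℕ} (h : (L : ℝ) ≤ X) : (L : ℝ) ^ (m + 1) ≤ x := by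
    refine (pow_le_pow_left₀ (Nat.cast_nonneg L) h _).trans_eq ?_
    rw [← Real.rpow_natCast, ← Real.rpow_mul hx0.le, Nat.cast_succ, one_div,
      inv_mul_cancel₀ (by positivity), Real.rpow_one]
  split_ifs with hNX
  · refine ⟨N, hN, hpow_le hNX, ?_⟩
    have hrpow : x ^ ((m : ℝ) + 1) = x ^ (m + 1) := by exact_mod_cast Real.rpow_natCast x (m + 1)
    rw [Nat.div_self hN, hrpow]
    push_cast
    nlinarith [pow_pos hx0 (m + 1), (Nat.one_le_cast.mpr hN : (1 : ℝ) ≤ N)]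
  · have hL1 : 1 ≤ ⌊X⌋₊ := Nat.le_floor (by exact_mod_cast hX1)
    have hLX : (⌊X⌋₊ : ℝ) ≤ X := Nat.floor_le (by linarith)
    have hXL : X ≤ 2 * ⌊X⌋₊ := by
      have := Nat.lt_floor_add_one X
      have : (1 : ℝ) ≤ ⌊X⌋₊ := by exact_mod_cast hL1
      linarith
    have hLN : ⌊X⌋₊ ≤ N := by exact_mod_cast hLX.trans (not_le.mp hNX).le
    have hexp : x ^ (m + 1) / X = x ^ (((m : ℝ) * ((m : ℝ) + 2)) / ((m : ℝ) + 1)) := by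
      rw [← Real.rpow_natCast, ← Real.rpow_sub hx0]
      congr 1
      push_cast
      field_simp
      ring
    refine ⟨⌊X⌋₊, hL1, hpow_le hLX, ?_⟩
    calc ((N / ⌊X⌋₊ + 1 : ℕ) : ℝ) ^ 2 * ⌊X⌋₊ * x ^ (m + 1)
        ≤ 8 * N ^ 2 / X * x ^ (m + 1) := by
          gcongr
          exact sq_cast_div_add_one_mul_le hLN (by linarith) hXL
      _ = 8 * (N ^ 2 * x ^ (((m : ℝ) * ((m : ℝ) + 2)) / ((m : ℝ) + 1))) := by
          rw [← hexp]
          ring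

theorem stmt7_general (m : ℕ) (s : ℕ → ℕ → ℕ) :
    ∃ c₀ : ℝ, 0 < c₀ ∧
      ∀ (p : ℕ) [Fact p.Prime],
        ∀ Fs : ℕ → Fin (m + 1) → MvPolynomial (Fin (m + 1)) (ZMod p),
          (∀ k, 1 ≤ k → IsFSystem m s (Fs k)) →
          (∀ k, 1 ≤ k → Function.Bijective
            (fun w : Fin (m + 1) → ZMod p => fun i => MvPolynomial.eval w (Fs k i))) →
          (∏ i ∈ Finset.range m, s i (i + 1)) ≠ 0 →
          ∀ c M N : ℕ, 0 < c → 0 < M → 0 < N →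
            ∀ a : Fin m → ZMod p, a ≠ 0 →
              (∑ w : Fin (m + 1) → ZMod p,
                  ‖∑ n ∈ Finset.range N,
                      eP p (∑ j : Fin m,
                          a j * MvPolynomial.eval w (iterSys m Fs n j.castSucc)) *
                        eM M (c * n)‖ ^ 2) ≤
                c₀ * (if (N : ℝ) ≤ (p : ℝ) ^ ((1 : ℝ) / ((m : ℝ) + 1))
                  then (N : ℝ) * (p : ℝ) ^ ((m : ℝ) + 1)
                  else (N : ℝ) ^ 2 *
                    (p : ℝ) ^ (((m : ℝ) * ((m : ℝ) + 2)) / ((m : ℝ) + 1))) := by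
  refine ⟨8 * (1 + expBound m s ^ m), by positivity, ?_⟩
  intro p _ Fs hsys hbij hprod c M N _ _ hN a ha
  have hs : ∀ i < m, s i (i + 1) ≠ 0 := fun i hi =>
    prod_ne_zero_iff.mp hprod i (mem_range.mpr hi)
  have hp : (1 : ℝ) ≤ p := by exact_mod_cast (Fact.out : p.Prime).one_le
  obtain ⟨L, hL, hLp, hbound⟩ := exists_blockLength m N hN hp
  calc _ ≤ (1 + expBound m s ^ m) * (((N / L + 1 : ℕ) : ℝ) ^ 2 * L * p ^ (m + 1)) :=
        sum_norm_sq_sum_eP_iterPhase_le_of_pow_le hsys hbij hs ha _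
          (fun n => (norm_eM M (c * n)).le) N hL hLp
    _ ≤ _ := (mul_le_mul_of_nonneg_left hbound (by positivity)).trans_eq (by ring)

theorem stmt7 (m : ℕ) (hm : 1 ≤ m) (s : ℕ → ℕ → ℕ) :
    ∃ c₀ : ℝ, 0 < c₀ ∧
      ∀ (p : ℕ) [Fact p.Prime],
        ∀ Fs : ℕ → Fin (m + 1) → MvPolynomial (Fin (m + 1)) (ZMod p),
          (∀ k, 1 ≤ k → IsFSystem m s (Fs k)) →
          (∀ k, 1 ≤ k → Function.Bijective
            (fun w : Fin (m + 1) → ZMod p => fun i => MvPolynomial.eval w (Fs k i))) →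
          (∏ i ∈ Finset.range m, s i (i + 1)) ≠ 0 →
          ∀ c M N : ℕ, 0 < c → 0 < M → 0 < N →
            ∀ a : Fin m → ZMod p, a ≠ 0 →
              (∑ w : Fin (m + 1) → ZMod p,
                  ‖∑ n ∈ Finset.range N,
                      eP p (∑ j : Fin m,
                          a j * MvPolynomial.eval w (iterSys m Fs n j.castSucc)) *
                        eM M (c * n)‖ ^ 2) ≤
                c₀ * (if (N : ℝ) ≤ (p : ℝ) ^ ((1 : ℝ) / ((m : ℝ) + 1))
                  then (N : ℝ) * (p : ℝ) ^ ((m : ℝ) + 1)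
                  else (N : ℝ) ^ 2 *
                    (p : ℝ) ^ (((m : ℝ) * ((m : ℝ) + 2)) / ((m : ℝ) + 1))) :=
  stmt7_general m s
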